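/- arXiv:1902.00196 — 3 statements merged into one kernel-verified Lean document; each statement's English description precedes it below -/
import Mathlib

section
/- Let F, G, H : CohI^n → CohI be normal functors, let (f_{X⃗}) be a uniform family of cliques of the pointwise functor F ⊸ G (so f_{X⃗} ⊑ F(X⃗) ⊸ G(X⃗) for every n-tuple X⃗ of coherence spaces), and let (g_{X⃗}) be a uniform family of cliques of G ⊸ H. Then the family of relational compositions (g_{X⃗} ∘ f_{X⃗}), where g ∘ f = {(x,z) | ∃y, (x,y) ∈ f and (y,z) ∈ g}, is a uniform family of cliques of F ⊸ H. -/
open CategoryTheory Limits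

/-- A coherence space: a web together with a reflexive symmetric coherence relation. -/
structure CohSpace : Type 1 where
  web : Type
  coh : web → web → Prop
  refl : ∀ x, coh x x
  symm : ∀ {x y}, coh x y → coh y x

/-- An embedding of coherence spaces: an injection preserving and reflecting coherence. -/
@[ext]
structure CohEmb (X Y : CohSpace) : Type where
  toFun : X.web → Y.web
  inj : Function.Injective toFun
  coh_iff : ∀ x x', X.coh x x' ↔ Y.coh (toFun x) (toFun x')

/-- The category `CohI` of coherence spaces and embeddings. -/
instance : Category CohSpace where
  Hom := CohEmb
  id X := ⟨id, fun _ _ h => h, fun _ _ => Iff.rfl⟩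
  comp f g := ⟨g.toFun ∘ f.toFun, g.inj.comp f.inj,
    fun x x' => (f.coh_iff x x').trans (g.coh_iff _ _)⟩
  id_comp _ := rfl
  comp_id _ := rfl
  assoc _ _ _ := rfl

/-- A clique: a set of pairwise coherent points. -/
def CohSpace.IsClique (X : CohSpace) (c : Set X.web) : Prop :=
  ∀ ⦃x⦄, x ∈ c → ∀ ⦃y⦄, y ∈ c → X.coh x y

/-- Linear negation (dual) of a coherence space. -/
def CohSpace.dual (X : CohSpace) : CohSpace where
  web := X.web
  coh x y := x = y ∨ ¬ X.coh x y
  refl _ := Or.inl rfl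
  symm h := h.elim (fun h' => Or.inl h'.symm) (fun h' => Or.inr fun hc => h' (X.symm hc))

/-- Tensor product of coherence spaces. -/
def CohSpace.tens (X Y : CohSpace) : CohSpace where
  web := X.web × Y.web
  coh p q := X.coh p.1 q.1 ∧ Y.coh p.2 q.2
  refl p := ⟨X.refl p.1, Y.refl p.2⟩
  symm h := ⟨X.symm h.1, Y.symm h.2⟩

/-- Direct sum (`⊕`) of coherence spaces. -/
def CohSpace.sum (X Y : CohSpace) : CohSpace where
  web := X.web ⊕ Y.web
  coh := Sum.LiftRel X.coh Y.coh
  refl x := by cases x with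
    | inl a => exact Sum.LiftRel.inl (X.refl a)
    | inr b => exact Sum.LiftRel.inr (Y.refl b)
  symm h := by cases h with
    | inl h => exact Sum.LiftRel.inl (X.symm h)
    | inr h => exact Sum.LiftRel.inr (Y.symm h)

/-- Linear implication `X ⊸ Y := (X ⊗ Y^⊥)^⊥`. -/
def CohSpace.lolly (X Y : CohSpace) : CohSpace := (X.tens Y.dual).dual

/-- The with connective `X & Y := (X^⊥ ⊕ Y^⊥)^⊥`. -/
def CohSpace.withc (X Y : CohSpace) : CohSpace := (X.dual.sum Y.dual).dual

/-- The one-point coherence space (interpretation of `1` and `⊥`). -/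
def oneCoh : CohSpace where
  web := PUnit
  coh _ _ := True
  refl _ := trivial
  symm _ := trivial

/-- The empty coherence space (interpretation of `0` and `⊤`). -/
def topCoh : CohSpace where
  web := Empty
  coh x _ := x.elim
  refl x := x.elim
  symm {x} _ := x.elim

/-- The induced embedding between duals. -/
def CohEmb.dualMap {X Y : CohSpace} (f : X ⟶ Y) : X.dual ⟶ Y.dual where
  toFun := f.toFun
  inj := f.inj
  coh_iff x x' := by
    constructor
    · rintro (rfl | h)
      · exact Or.inl rfl
      · exact Or.inr fun hc => h ((f.coh_iff _ _).2 hc)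
    · rintro (h | h)
      · exact Or.inl (f.inj h)
      · exact Or.inr fun hc => h ((f.coh_iff _ _).1 hc)

/-- The induced embedding between tensor products. -/
def CohEmb.tensMap {X X' Y Y' : CohSpace} (f : X ⟶ X') (g : Y ⟶ Y') :
    X.tens Y ⟶ X'.tens Y' where
  toFun := Prod.map f.toFun g.toFun
  inj := f.inj.prodMap g.inj
  coh_iff p q := and_congr (f.coh_iff _ _) (g.coh_iff _ _)

/-- The induced embedding between direct sums. -/
def CohEmb.sumMap {X X' Y Y' : CohSpace} (f : X ⟶ X') (g : Y ⟶ Y') :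
    X.sum Y ⟶ X'.sum Y' where
  toFun := Sum.map f.toFun g.toFun
  inj := f.inj.sumMap g.inj
  coh_iff x x' := by
    constructor
    · intro h
      cases h with
      | inl h => exact Sum.LiftRel.inl ((f.coh_iff _ _).1 h)
      | inr h => exact Sum.LiftRel.inr ((g.coh_iff _ _).1 h)
    · intro h
      cases x with
      | inl a => cases x' with
        | inl a' => exact Sum.LiftRel.inl ((f.coh_iff _ _).2 (by cases h; assumption))
        | inr b' => exact absurd h (by intro hh; cases hh)
      | inr b => cases x' with
        | inl a' => exact absurd h (by intro hh; cases hh)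
        | inr b' => exact Sum.LiftRel.inr ((g.coh_iff _ _).2 (by cases h; assumption))

/-- Linear negation as a covariant endofunctor of `CohI`. -/
def dualFunctor : CohSpace ⥤ CohSpace where
  obj := CohSpace.dual
  map := CohEmb.dualMap
  map_id _ := rfl
  map_comp _ _ := rfl

/-- Tensor as a functor on the product category. -/
def tensorFunctor : CohSpace × CohSpace ⥤ CohSpace where
  obj p := p.1.tens p.2
  map f := CohEmb.tensMap f.1 f.2
  map_id _ := rfl
  map_comp _ _ := rfl

/-- Sum as a functor on the product category. -/
def sumFunctor : CohSpace × CohSpace ⥤ CohSpace where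
  obj p := p.1.sum p.2
  map f := CohEmb.sumMap f.1 f.2
  map_id p := by
    apply CohEmb.ext
    funext x
    cases x <;> rfl
  map_comp f g := by
    apply CohEmb.ext
    funext x
    cases x <;> rfl

/-- The category `CohI^n`. -/
abbrev CohTuple (n : ℕ) := Fin n → CohSpace

/-- A normal functor: one preserving filtered colimits and finite pullbacks. -/
def IsNormalFunctor {C : Type*} {D : Type*} [Category C] [Category D] (F : C ⥤ D) : Prop :=
  PreservesFilteredColimits F ∧ PreservesLimitsOfShape WalkingCospan F

/-- The web functor `CohI ⥤ Set`. -/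
def webF : CohSpace ⥤ Type where
  obj X := X.web
  map f := TypeCat.ofHom f.toFun
  map_id _ := rfl
  map_comp _ _ := rfl

/-- The category of elements of the web presheaf `|F|` of `F : CohI^n ⥤ CohI`. -/
abbrev Elts {n : ℕ} (F : CohTuple n ⥤ CohSpace) := (F ⋙ webF).Elements

/-- `(X⃗, x)` is a normal form of `F`: its webs are finite and it is initial in its own
slice category of `El(|F|)`. -/
def IsNormalForm {n : ℕ} {F : CohTuple n ⥤ CohSpace} (e : Elts F) : Prop :=
  (∀ i, Finite (e.1 i).web) ∧
    ∀ (f : Elts F) (u : f ⟶ e), ∃! v : e ⟶ f, v ≫ u = 𝟙 e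

/-- The pointwise dual functor `F^⊥`. -/
def dualF {n : ℕ} (F : CohTuple n ⥤ CohSpace) : CohTuple n ⥤ CohSpace := F ⋙ dualFunctor

/-- The pointwise tensor functor `F ⊗ G`. -/
def tensF {n : ℕ} (F G : CohTuple n ⥤ CohSpace) : CohTuple n ⥤ CohSpace :=
  F.prod' G ⋙ tensorFunctor

/-- The pointwise sum functor `F ⊕ G`. -/
def sumF {n : ℕ} (F G : CohTuple n ⥤ CohSpace) : CohTuple n ⥤ CohSpace :=
  F.prod' G ⋙ sumFunctor

/-- The pointwise linear implication functor `F ⊸ G`. -/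
def lollyF {n : ℕ} (F G : CohTuple n ⥤ CohSpace) : CohTuple n ⥤ CohSpace :=
  dualF (tensF F (dualF G))

/-- The degree of a normal functor: the supremum of the cardinalities of the webs
occurring in its normal forms. -/
noncomputable def degree {n : ℕ} (F : CohTuple n ⥤ CohSpace) : ℕ∞ :=
  ⨆ (e : Elts F) (_ : IsNormalForm e) (i : Fin n), (Nat.card (e.1 i).web : ℕ∞)

/-- `F` sends coherence spaces with finite webs to coherence spaces with finite webs. -/
def PreservesFiniteWebs {n : ℕ} (F : CohTuple n ⥤ CohSpace) : Prop :=
  ∀ X : CohTuple n, (∀ i, Finite (X i).web) → Finite (F.obj X).web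

/-- A finite normal functor: one preserving finiteness of webs and of finite degree. -/
def IsFiniteFunctor {n : ℕ} (F : CohTuple n ⥤ CohSpace) : Prop :=
  PreservesFiniteWebs F ∧ degree F < ⊤

/-- `NF(F)`: the set of isomorphism classes of normal forms of `F`. -/
def NFSet {n : ℕ} (F : CohTuple n ⥤ CohSpace) :
    Set (Quotient (isIsomorphicSetoid (Elts F))) :=
  { q | ∃ e : Elts F, IsNormalForm e ∧ Quotient.mk _ e = q }

/-- A uniform family of cliques of `F : CohI^n ⥤ CohI`. -/
def IsUniformFamily {n : ℕ} (F : CohTuple n ⥤ CohSpace)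
    (c : ∀ X : CohTuple n, Set (F.obj X).web) : Prop :=
  (∀ X, (F.obj X).IsClique (c X)) ∧
    ∀ (X Y : CohTuple n) (ι : X ⟶ Y), c X = (F.map ι).toFun ⁻¹' c Y

/-- Coherence of two normal forms: all their instantiations along embeddings into a
common tuple are coherent. -/
def NFCoherent {n : ℕ} {F : CohTuple n ⥤ CohSpace} (e e' : Elts F) : Prop :=
  ∀ (Z : CohTuple n) (ι : e.1 ⟶ Z) (κ : e'.1 ⟶ Z),
    (F.obj Z).coh ((F.map ι).toFun e.2) ((F.map κ).toFun e'.2)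

/-- A coherence space structure on a canonical finite web `Fin k`. -/
structure FinCohData where
  k : ℕ
  r : Fin k → Fin k → Prop
  refl : ∀ i, r i i
  symm : ∀ {i j}, r i j → r j i

/-- The coherence space associated to a `FinCohData`. -/
def FinCohData.toCoh (d : FinCohData) : CohSpace where
  web := Fin d.k
  coh := d.r
  refl := d.refl
  symm := d.symm

/-- A canonical tuple of finite coherence spaces. -/
def canonTuple {n : ℕ} (d : Fin n → FinCohData) : CohTuple n := fun i => (d i).toCoh

/-- Self-coherent normal forms of `F` carried by canonical tuples of finite coherence
spaces; the web of the trace is the set of their isomorphism classes. -/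
def CanonNF {n : ℕ} (F : CohTuple n ⥤ CohSpace) : Type :=
  Σ d : Fin n → FinCohData,
    { x : (F.obj (canonTuple d)).web //
        IsNormalForm (F := F) ⟨canonTuple d, x⟩ ∧
          NFCoherent (F := F) ⟨canonTuple d, x⟩ ⟨canonTuple d, x⟩ }

/-- The element of `El(|F|)` carried by a canonical normal form. -/
def CanonNF.toElts {n : ℕ} {F : CohTuple n ⥤ CohSpace} (c : CanonNF F) : Elts F :=
  ⟨canonTuple c.1, c.2.1⟩

/-- Canonical normal forms are identified when isomorphic in `El(|F|)`. -/
def traceSetoid {n : ℕ} (F : CohTuple n ⥤ CohSpace) : Setoid (CanonNF F) :=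
  (isIsomorphicSetoid (Elts F)).comap CanonNF.toElts

/-- The trace `Tr(F)`: isomorphism classes of self-coherent normal forms, with the
coherence relation between normal forms. -/
def Tr {n : ℕ} (F : CohTuple n ⥤ CohSpace) : CohSpace where
  web := Quotient (traceSetoid F)
  coh q q' := ∃ c c' : CanonNF F,
    Quotient.mk (traceSetoid F) c = q ∧ Quotient.mk (traceSetoid F) c' = q' ∧
      NFCoherent c.toElts c'.toElts
  refl q := by
    obtain ⟨c, rfl⟩ := Quotient.exists_rep q
    exact ⟨c, c, rfl, rfl, c.2.2.2⟩
  symm h := by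
    obtain ⟨c, c', h1, h2, h3⟩ := h
    exact ⟨c', c, h2, h1, fun Z ι κ => (F.obj Z).symm (h3 Z κ ι)⟩

/-- The family of functors whose pointwise pairing computes `Z ↦ (X₁,…,Xₙ,Z)`. -/
def gfam {n : ℕ} (X : CohTuple n) (i : Fin (n + 1)) : CohTuple 1 ⥤ CohSpace :=
  if h : (i : ℕ) < n then (Functor.const (CohTuple 1)).obj (X ⟨i, h⟩)
  else Pi.eval (fun _ : Fin 1 => CohSpace) 0

/-- The partial application `F(X₁,…,Xₙ,−)` of `F : CohI^(n+1) ⥤ CohI`. -/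
def partialApp {n : ℕ} (F : CohTuple (n + 1) ⥤ CohSpace) (X : CohTuple n) :
    CohTuple 1 ⥤ CohSpace :=
  Functor.pi' (gfam X) ⋙ F

/-- The embedding `(X⃗, Z) ↪ (Y⃗, Z)` induced componentwise by `ι : X⃗ ↪ Y⃗`. -/
def extHom {n : ℕ} {X Y : CohTuple n} (ι : X ⟶ Y) (Z : CohTuple 1) (i : Fin (n + 1)) :
    (gfam X i).obj Z ⟶ (gfam Y i).obj Z := by
  by_cases h : (i : ℕ) < n
  · simp only [gfam, dif_pos h]
    exact ι ⟨i, h⟩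
  · simp only [gfam, dif_neg h]
    exact 𝟙 (Z 0)

/-- The embedding `extHom` as a morphism in `CohI^(n+1)`. -/
def extHomPi {n : ℕ} {X Y : CohTuple n} (ι : X ⟶ Y) (Z : CohTuple 1) :
    (Functor.pi' (gfam X)).obj Z ⟶ (Functor.pi' (gfam Y)).obj Z :=
  fun i => extHom ι Z i

/-- Transport along an object equality `G.obj X = Tr (partialApp F X)`. -/
def trWebCast {n : ℕ} {F : CohTuple (n + 1) ⥤ CohSpace} {G : CohTuple n ⥤ CohSpace}
    (h : ∀ X, G.obj X = Tr (partialApp F X)) (X : CohTuple n) :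
    (Tr (partialApp F X)).web → (G.obj X).web :=
  fun q => cast (congrArg CohSpace.web (h X)).symm q

/-- `G` acts on embeddings the way `∀(F)` does: normal forms are transported by
keeping the bound variables and substituting along `ι` on the free ones. -/
def ForallAction {n : ℕ} (F : CohTuple (n + 1) ⥤ CohSpace) (G : CohTuple n ⥤ CohSpace)
    (hobj : ∀ X, G.obj X = Tr (partialApp F X)) : Prop :=
  ∀ (X Y : CohTuple n) (ι : X ⟶ Y) (c : CanonNF (partialApp F X)),
    ∃ c' : CanonNF (partialApp F Y),
      (G.map ι).toFun (trWebCast hobj X (Quotient.mk (traceSetoid _) c))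
          = trWebCast hobj Y (Quotient.mk (traceSetoid _) c') ∧
        c'.1 = c.1 ∧
        HEq c'.2.1 ((F.map (extHomPi ι (canonTuple c.1))).toFun c.2.1)

/-- `G` is (a presentation of) the functor `∀(F)`. -/
def IsForallExtension {n : ℕ} (F : CohTuple (n + 1) ⥤ CohSpace)
    (G : CohTuple n ⥤ CohSpace) : Prop :=
  ∃ hobj : ∀ X, G.obj X = Tr (partialApp F X), ForallAction F G hobj

/-- The uniform family of cliques obtained by instantiating a clique of the trace. -/
def instFam {n : ℕ} (F : CohTuple n ⥤ CohSpace) (c : Set (Tr F).web) :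
    ∀ X : CohTuple n, Set (F.obj X).web := fun X =>
  { x | ∃ (d : CanonNF F) (ι : canonTuple d.1 ⟶ X),
      Quotient.mk (traceSetoid F) d ∈ c ∧ (F.map ι).toFun d.2.1 = x }

/-!
Uniformity of `g ∘ f` is the nontrivial half: if `(ι x, y) ∈ f_Y` and `(y, ι z) ∈ g_Y`, one
has to see that the middle point `y` lies in the image of `G(ι)`. Glue two copies of `Y` along
`X`; the two copy embeddings `e₁, e₂ : Y ↪ Z` agree on `X` and `ι` is their pullback.
Uniformity puts `(e₁ ι x, e₁ y)` and `(e₂ ι x, e₂ y)` in the clique `f_Z`, with equal inputs,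
so `G(e₁) y ≎ G(e₂) y`; in the same way the clique `g_Z` relates these coherent inputs to the
equal outputs `H(e₁) ι z = H(e₂) ι z`, which forces `G(e₁) y = G(e₂) y`. Since `G` preserves
pullbacks, `y` comes from `G(X)`.
-/

open SetRel

namespace CohSpace

variable {X Y Z : CohSpace}

theorem lolly_coh_iff {p q : X.web × Y.web} :
    (X.lolly Y).coh p q ↔ (X.coh p.1 q.1 → Y.coh p.2 q.2 ∧ (p.2 = q.2 → p.1 = q.1)) := by
  obtain ⟨x, y⟩ := p
  obtain ⟨x', y'⟩ := q
  change (x, y) = (x', y') ∨ ¬ (X.coh x x' ∧ (y = y' ∨ ¬ Y.coh y y')) ↔ _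
  by_cases hy : y = y'
  · subst hy
    have := Y.refl y
    simp only [Prod.mk.injEq, true_or, and_true]
    tauto
  · simp only [Prod.mk.injEq, hy, and_false, false_or, false_implies, and_true]
    tauto

namespace IsClique

theorem lolly_coh_of_fst_eq {c : Set (X.lolly Y).web} (hc : (X.lolly Y).IsClique c)
    {x : X.web} {y y' : Y.web} (h : (x, y) ∈ c) (h' : (x, y') ∈ c) : Y.coh y y' :=
  (lolly_coh_iff.1 (hc h h') (X.refl x)).1

theorem lolly_eq_of_snd_eq {c : Set (X.lolly Y).web} (hc : (X.lolly Y).IsClique c)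
    {x x' : X.web} {y : Y.web} (h : (x, y) ∈ c) (h' : (x', y) ∈ c) (hx : X.coh x x') :
    x = x' :=
  (lolly_coh_iff.1 (hc h h') hx).2 rfl

theorem lolly_comp {f : Set (X.lolly Y).web} {g : Set (Y.lolly Z).web}
    (hf : (X.lolly Y).IsClique f) (hg : (Y.lolly Z).IsClique g) :
    (X.lolly Z).IsClique (f ○ g) := by
  rintro ⟨x, z⟩ ⟨y, hxy, hyz⟩ ⟨x', z'⟩ ⟨y', hxy', hyz'⟩
  refine lolly_coh_iff.2 fun hx => ?_
  obtain ⟨hy, hyx⟩ := lolly_coh_iff.1 (hf hxy hxy') hx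
  obtain ⟨hz, hzy⟩ := lolly_coh_iff.1 (hg hyz hyz') hy
  exact ⟨hz, fun h => hyx (hzy h)⟩

end IsClique

end CohSpace

namespace CohEmb

variable {W X Y : CohSpace}

noncomputable def factor (ι : X ⟶ Y) (φ : W ⟶ Y)
    (h : ∀ w, φ.toFun w ∈ Set.range ι.toFun) : W ⟶ X where
  toFun w := (Set.mem_range.1 (h w)).choose
  inj w w' hw := φ.inj <| by
    rw [← (h w).choose_spec, ← (h w').choose_spec]
    exact congrArg ι.toFun hw
  coh_iff w w' := by
    rw [φ.coh_iff, ι.coh_iff, (h w).choose_spec, (h w').choose_spec]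

theorem factor_comp (ι : X ⟶ Y) (φ : W ⟶ Y) (h : ∀ w, φ.toFun w ∈ Set.range ι.toFun) :
    factor ι φ h ≫ ι = φ :=
  CohEmb.ext <| funext fun w => (h w).choose_spec

theorem eq_factor {ι : X ⟶ Y} {φ : W ⟶ Y} (h : ∀ w, φ.toFun w ∈ Set.range ι.toFun)
    {μ : W ⟶ X} (hμ : μ ≫ ι = φ) : μ = factor ι φ h :=
  CohEmb.ext <| funext fun w => ι.inj <|
    congrArg (fun ψ : W ⟶ Y => ψ.toFun w) (hμ.trans (factor_comp ι φ h).symm)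

def point (y : Y.web) : oneCoh ⟶ Y where
  toFun _ := y
  inj _ _ _ := rfl
  coh_iff _ _ := ⟨fun _ => Y.refl y, fun _ => trivial⟩

end CohEmb

theorem CohSpace.mem_range_of_isPullback {X Y Z : CohSpace} {ι : X ⟶ Y} {e₁ e₂ : Y ⟶ Z}
    (hι : IsPullback ι ι e₁ e₂) {y : Y.web} (hy : e₁.toFun y = e₂.toFun y) :
    y ∈ Set.range ι.toFun := by
  have hpt : CohEmb.point y ≫ e₁ = CohEmb.point y ≫ e₂ := CohEmb.ext (funext fun _ => hy)
  exact ⟨(hι.lift _ _ hpt).toFun PUnit.unit,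
    congrArg (fun φ : oneCoh ⟶ Y => φ.toFun PUnit.unit) (hι.lift_fst _ _ hpt)⟩

theorem CategoryTheory.Functor.map_comp_toFun {C : Type*} [Category C] (F : C ⥤ CohSpace)
    {A B D : C} (φ : A ⟶ B) (ψ : B ⟶ D) (a : (F.obj A).web) :
    (F.map (φ ≫ ψ)).toFun a = (F.map ψ).toFun ((F.map φ).toFun a) := by
  rw [F.map_comp]
  rfl

namespace CohSpace

variable {X Y : CohSpace}

/-- Two copies of `Y`; a point of the left copy in the range of `ι` is coherent with a point of
the right copy exactly when they are coherent in `Y`, and points outside the range never are. -/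
def glue (ι : X ⟶ Y) : CohSpace where
  web := Y.web ⊕ Y.web
  coh
    | .inl a, .inl a' => Y.coh a a'
    | .inr b, .inr b' => Y.coh b b'
    | .inl a, .inr b => a ∈ Set.range ι.toFun ∧ Y.coh a b
    | .inr b, .inl a => a ∈ Set.range ι.toFun ∧ Y.coh b a
  refl p := by cases p <;> exact Y.refl _
  symm {p q} h := by
    cases p <;> cases q
    · exact Y.symm h
    · exact ⟨h.1, Y.symm h.2⟩
    · exact ⟨h.1, Y.symm h.2⟩
    · exact Y.symm h

def glueLeft (ι : X ⟶ Y) : Y ⟶ glue ι where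
  toFun := Sum.inl
  inj := Sum.inl_injective
  coh_iff _ _ := Iff.rfl

open Classical in
/-- The right copy, except that the range of `ι` is sent to the left copy. -/
noncomputable def glueRight (ι : X ⟶ Y) : Y ⟶ glue ι where
  toFun y := if y ∈ Set.range ι.toFun then .inl y else .inr y
  inj y y' h := by
    by_cases hy : y ∈ Set.range ι.toFun <;> by_cases hy' : y' ∈ Set.range ι.toFun <;>
      simp_all <;> first | exact Sum.inl.inj h | exact Sum.inr.inj h
  coh_iff y y' := by
    by_cases hy : y ∈ Set.range ι.toFun <;> by_cases hy' : y' ∈ Set.range ι.toFun <;>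
      simp_all [glue]

theorem glueRight_apply_of_mem (ι : X ⟶ Y) {y : Y.web} (hy : y ∈ Set.range ι.toFun) :
    (glueRight ι).toFun y = (glueLeft ι).toFun y :=
  if_pos hy

theorem glueLeft_eq_glueRight_iff (ι : X ⟶ Y) {y y' : Y.web} :
    (glueLeft ι).toFun y = (glueRight ι).toFun y' ↔ y = y' ∧ y ∈ Set.range ι.toFun := by
  by_cases hy' : y' ∈ Set.range ι.toFun
  · rw [glueRight_apply_of_mem ι hy', (glueLeft ι).inj.eq_iff]
    exact ⟨fun h => ⟨h, h ▸ hy'⟩, And.left⟩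
  · simp_all [glueLeft, glueRight]

theorem comp_glueLeft (ι : X ⟶ Y) : ι ≫ glueLeft ι = ι ≫ glueRight ι :=
  CohEmb.ext <| funext fun x => ((glueLeft_eq_glueRight_iff ι).2 ⟨rfl, x, rfl⟩)

end CohSpace

section GlueFamily

open CohSpace

variable {J : Type*} {X Y : J → CohSpace}

def glueFamily (ι : X ⟶ Y) : J → CohSpace := fun j => glue (ι j)

def glueLeftFamily (ι : X ⟶ Y) : Y ⟶ glueFamily ι := fun j => glueLeft (ι j)

noncomputable def glueRightFamily (ι : X ⟶ Y) : Y ⟶ glueFamily ι := fun j => glueRight (ι j)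

theorem glueFamily_cone_fst_eq_snd (ι : X ⟶ Y)
    (s : PullbackCone (glueLeftFamily ι) (glueRightFamily ι)) (j : J) (w : (s.pt j).web) :
    (s.fst j).toFun w = (s.snd j).toFun w ∧ (s.fst j).toFun w ∈ Set.range (ι j).toFun :=
  (glueLeft_eq_glueRight_iff (ι j)).1 <|
    congrArg (fun φ : s.pt j ⟶ glue (ι j) => φ.toFun w) (congrFun s.condition j)

theorem comp_glueLeftFamily (ι : X ⟶ Y) : ι ≫ glueLeftFamily ι = ι ≫ glueRightFamily ι :=
  funext fun j => comp_glueLeft (ι j)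

theorem isPullback_glueFamily (ι : X ⟶ Y) :
    IsPullback ι ι (glueLeftFamily ι) (glueRightFamily ι) := by
  refine IsPullback.of_isLimit (PullbackCone.IsLimit.mk (comp_glueLeftFamily ι)
    (fun s j => CohEmb.factor (ι j) (s.fst j) fun w => (glueFamily_cone_fst_eq_snd ι s j w).2)
    (fun s => funext fun j => CohEmb.factor_comp _ _ _)
    (fun s => funext fun j => ?_) fun s m hm _ => funext fun j => ?_)
  · refine (CohEmb.factor_comp _ _ _).trans ?_
    exact CohEmb.ext <| funext fun w => (glueFamily_cone_fst_eq_snd ι s j w).1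
  · exact CohEmb.eq_factor _ (congrFun hm j)

end GlueFamily

namespace IsUniformFamily

variable {n : ℕ} {F G H : CohTuple n ⥤ CohSpace} {X Y : CohTuple n}

theorem lolly_map_mem {c : ∀ X, Set ((lollyF F G).obj X).web}
    (hc : IsUniformFamily (lollyF F G) c) (ι : X ⟶ Y) {x : (F.obj X).web} {y : (G.obj X).web}
    (h : (x, y) ∈ c X) : ((F.map ι).toFun x, (G.map ι).toFun y) ∈ c Y := by
  rw [hc.2 X Y ι] at h
  exact h

theorem lolly_mem_of_map_mem {c : ∀ X, Set ((lollyF F G).obj X).web}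
    (hc : IsUniformFamily (lollyF F G) c) (ι : X ⟶ Y) {x : (F.obj X).web} {y : (G.obj X).web}
    (h : ((F.map ι).toFun x, (G.map ι).toFun y) ∈ c Y) : (x, y) ∈ c X := by
  rw [hc.2 X Y ι]
  exact h

variable {f : ∀ X, Set ((lollyF F G).obj X).web} {g : ∀ X, Set ((lollyF G H).obj X).web}

theorem mem_range_of_lolly_comp [PreservesLimitsOfShape WalkingCospan G]
    (hf : IsUniformFamily (lollyF F G) f) (hg : IsUniformFamily (lollyF G H) g) (ι : X ⟶ Y)
    {x : (F.obj X).web} {y : (G.obj Y).web} {z : (H.obj X).web}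
    (hxy : ((F.map ι).toFun x, y) ∈ f Y) (hyz : (y, (H.map ι).toFun z) ∈ g Y) :
    y ∈ Set.range (G.map ι).toFun := by
  have hF : (F.map (glueLeftFamily ι)).toFun ((F.map ι).toFun x) =
      (F.map (glueRightFamily ι)).toFun ((F.map ι).toFun x) := by
    rw [← Functor.map_comp_toFun, ← Functor.map_comp_toFun, comp_glueLeftFamily]
  have hH : (H.map (glueLeftFamily ι)).toFun ((H.map ι).toFun z) =
      (H.map (glueRightFamily ι)).toFun ((H.map ι).toFun z) := by
    rw [← Functor.map_comp_toFun, ← Functor.map_comp_toFun, comp_glueLeftFamily]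
  have hxy₁ := hf.lolly_map_mem (glueLeftFamily ι) hxy
  have hxy₂ := hf.lolly_map_mem (glueRightFamily ι) hxy
  have hyz₁ := hg.lolly_map_mem (glueLeftFamily ι) hyz
  have hyz₂ := hg.lolly_map_mem (glueRightFamily ι) hyz
  rw [hF] at hxy₁
  rw [hH] at hyz₁
  have hcoh := (hf.1 _).lolly_coh_of_fst_eq hxy₁ hxy₂
  exact CohSpace.mem_range_of_isPullback ((isPullback_glueFamily ι).map G)
    ((hg.1 _).lolly_eq_of_snd_eq hyz₁ hyz₂ hcoh)

theorem lolly_comp [PreservesLimitsOfShape WalkingCospan G]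
    (hf : IsUniformFamily (lollyF F G) f) (hg : IsUniformFamily (lollyF G H) g) :
    IsUniformFamily (lollyF F H) fun X => f X ○ g X := by
  refine ⟨fun X => (hf.1 X).lolly_comp (hg.1 X), fun X Y ι => ?_⟩
  ext ⟨x, z⟩
  constructor
  · rintro ⟨y, hxy, hyz⟩
    exact ⟨_, hf.lolly_map_mem ι hxy, hg.lolly_map_mem ι hyz⟩
  · rintro ⟨y, hxy, hyz⟩
    obtain ⟨y, rfl⟩ := hf.mem_range_of_lolly_comp hg ι hxy hyz
    exact ⟨y, hf.lolly_mem_of_map_mem ι hxy, hg.lolly_mem_of_map_mem ι hyz⟩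

end IsUniformFamily

theorem stmt2_general {n : ℕ} (F G H : CohTuple n ⥤ CohSpace)
    (hG : IsNormalFunctor G)
    (f : ∀ X : CohTuple n, Set ((F.obj X).web × (G.obj X).web))
    (g : ∀ X : CohTuple n, Set ((G.obj X).web × (H.obj X).web))
    (hf : IsUniformFamily (lollyF F G) f) (hg : IsUniformFamily (lollyF G H) g) :
    IsUniformFamily (lollyF F H)
      (fun X => { p | ∃ y, (p.1, y) ∈ f X ∧ (y, p.2) ∈ g X }) :=
  have := hG.2
  hf.lolly_comp hg

theorem stmt2 {n : ℕ} (F G H : CohTuple n ⥤ CohSpace)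
    (hF : IsNormalFunctor F) (hG : IsNormalFunctor G) (hH : IsNormalFunctor H)
    (f : ∀ X : CohTuple n, Set ((F.obj X).web × (G.obj X).web))
    (g : ∀ X : CohTuple n, Set ((G.obj X).web × (H.obj X).web))
    (hf : IsUniformFamily (lollyF F G) f) (hg : IsUniformFamily (lollyF G H) g) :
    IsUniformFamily (lollyF F H)
      (fun X => { p | ∃ y, (p.1, y) ∈ f X ∧ (y, p.2) ∈ g X }) :=
  stmt2_general F G H hG f g hf hg
end

section
/- Girard's normal form theorem: let F : CohI^n → CohI be a functor, |F| the Set-valued functor obtained by composing F with the web functor, and El(|F|) its category of elements. Then F preserves filtered colimits and finite pullbacks if and only if for every n-tuple X⃗ of coherence spaces and every x ∈ |F(X⃗)|, the slice category El(|F|)/(X⃗, x) admits an initial object (X⃗', x') in which every component X'_i has a finite web. Moreover, in that case, any such (X⃗', x') is initial in its own slice category El(|F|)/(X⃗', x'). -/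
open CategoryTheory Limits

/-! Since embeddings are injective, a filtered colimit of coherence spaces is the union of the
images of its stages, and a pullback of two embeddings is the intersection of their images.
Call a tuple of subsets of the webs of `X` a support of `x ∈ |F X|` if `x` is the image of a
point along an embedding whose image lies in it. If `F` preserves filtered colimits, `x` has a
finite support; if `F` preserves pullbacks, supports are closed under intersection. So `x` has a
least finite support, and the subtuple it spans is initial over `(X, x)`, because the image of
any `(Y, y) ⟶ (X, x)` is a support. Conversely, finite initial objects over `(X, x)` make `x`
come from a stage of any filtered colimit presenting `X`, and lift compatible pairs of points
to a pullback. The last assertion is formal: an object initial over `e` has no endomorphism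
over `e` other than the identity. -/

lemma Set.exists_finite_least_of_inf_mem {ι : Type*} [Finite ι] {α : ι → Type*}
    {P : (∀ i, Set (α i)) → Prop} (hinf : ∀ S T, P S → P T → P (S ⊓ T))
    (hfin : ∃ S, (∀ i, (S i).Finite) ∧ P S) :
    ∃ S, (∀ i, (S i).Finite) ∧ P S ∧ ∀ T, P T → S ≤ T := by
  classical
  obtain ⟨S₁, hS₁, hP₁⟩ := hfin
  obtain ⟨s, hs⟩ := exists_minimal_of_wellFoundedLT (fun s : ∀ i, Finset (α i) => P fun i => s i)
    ⟨fun i => (hS₁ i).toFinset, by simpa using hP₁⟩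
  refine ⟨fun i => s i, fun i => (s i).finite_toSet, hs.prop, fun T hT i a ha => ?_⟩
  have hfilter : P fun i => ((s i).filter (· ∈ T i) : Set (α i)) := by
    convert hinf _ _ hs.prop hT using 1
    exact funext fun i => Finset.coe_filter _ _
  exact (Finset.mem_filter.1 (hs.le_of_le hfilter (fun i => Finset.filter_subset _ _) i ha)).2

lemma CategoryTheory.existsUnique_section_of_initial_over {C : Type*} [Category C] {e e₀ : C}
    {u₀ : e₀ ⟶ e} (h : ∀ (f : C) (u : f ⟶ e), ∃! v : e₀ ⟶ f, v ≫ u = u₀) (f : C) (u : f ⟶ e₀) :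
    ∃! v : e₀ ⟶ f, v ≫ u = 𝟙 e₀ := by
  obtain ⟨v, hv, hvu⟩ := h f (u ≫ u₀)
  have hendo {w : e₀ ⟶ e₀} (hw : w ≫ u₀ = u₀) : w = 𝟙 e₀ :=
    (h e₀ u₀).unique hw (Category.id_comp u₀)
  refine ⟨v, hendo (by rw [Category.assoc, hv]), fun v' (hv' : v' ≫ u = 𝟙 e₀) =>
    hvu v' (show v' ≫ u ≫ u₀ = u₀ by rw [← Category.assoc, hv', Category.id_comp])⟩

namespace CohSpace

section Embeddings

variable {X Y Z : CohSpace}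

@[simp]
lemma comp_toFun (f : X ⟶ Y) (g : Y ⟶ Z) (x : X.web) : (f ≫ g).toFun x = g.toFun (f.toFun x) :=
  rfl

@[ext]
lemma hom_ext {f g : X ⟶ Y} (h : ∀ x, f.toFun x = g.toFun x) : f = g :=
  CohEmb.ext (funext h)

instance (f : X ⟶ Y) : Mono f :=
  ⟨fun _ _ h => hom_ext fun x => f.inj (congrArg (·.toFun x) h)⟩

lemma map_toFun_map_toFun {C : Type*} [Category C] (G : C ⥤ CohSpace) {A B D : C} {f : A ⟶ B}
    {g : B ⟶ D} {h : A ⟶ D} (hfg : f ≫ g = h) (a : (G.obj A).web) :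
    (G.map g).toFun ((G.map f).toFun a) = (G.map h).toFun a := by
  rw [← hfg, G.map_comp, comp_toFun]

def ofComp (g : Y ⟶ Z) (h : X ⟶ Z) (φ : X.web → Y.web) (hφ : ∀ x, g.toFun (φ x) = h.toFun x) :
    X ⟶ Y where
  toFun := φ
  inj x x' e := h.inj (by rw [← hφ, ← hφ, e])
  coh_iff x x' := by rw [h.coh_iff, ← hφ, ← hφ, ← g.coh_iff]

@[simp]
lemma ofComp_comp (g : Y ⟶ Z) (h : X ⟶ Z) (φ : X.web → Y.web)
    (hφ : ∀ x, g.toFun (φ x) = h.toFun x) : ofComp g h φ hφ ≫ g = h :=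
  hom_ext hφ

noncomputable def liftOfRangeSubset (g : Y ⟶ Z) (h : X ⟶ Z)
    (hr : Set.range h.toFun ⊆ Set.range g.toFun) : X ⟶ Y :=
  ofComp g h (fun x => (hr ⟨x, rfl⟩).choose) fun x => (hr ⟨x, rfl⟩).choose_spec

@[simp]
lemma liftOfRangeSubset_comp (g : Y ⟶ Z) (h : X ⟶ Z)
    (hr : Set.range h.toFun ⊆ Set.range g.toFun) : liftOfRangeSubset g h hr ≫ g = h :=
  ofComp_comp ..

def restrict (X : CohSpace) (S : Set X.web) : CohSpace where
  web := S
  coh a b := X.coh a b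
  refl a := X.refl a
  symm h := X.symm h

def restrictIncl (X : CohSpace) (S : Set X.web) : X.restrict S ⟶ X :=
  ⟨Subtype.val, Subtype.val_injective, fun _ _ => Iff.rfl⟩

lemma range_restrictIncl (X : CohSpace) (S : Set X.web) :
    Set.range (X.restrictIncl S).toFun = S :=
  Subtype.range_val

def codRestrict (f : X ⟶ Y) (S : Set Y.web) (hf : ∀ x, f.toFun x ∈ S) : X ⟶ Y.restrict S :=
  ofComp (Y.restrictIncl S) f (fun x => ⟨f.toFun x, hf x⟩) fun _ => rfl

@[simp]
lemma codRestrict_comp (f : X ⟶ Y) (S : Set Y.web) (hf : ∀ x, f.toFun x ∈ S) :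
    codRestrict f S hf ≫ Y.restrictIncl S = f :=
  ofComp_comp ..

end Embeddings

section Colimits

variable {J : Type*} [Category J]

lemma cocone_w_toFun {D : J ⥤ CohSpace} (c : Cocone D) {j j' : J} (f : j ⟶ j')
    (a : (D.obj j).web) : (c.ι.app j').toFun ((D.map f).toFun a) = (c.ι.app j).toFun a := by
  rw [← comp_toFun, c.w]

abbrev imageCocone {D : J ⥤ CohSpace} (c : Cocone D) : Cocone D where
  pt := c.pt.restrict (⋃ j, Set.range (c.ι.app j).toFun)
  ι :=
    { app j := codRestrict (c.ι.app j) _ fun a => Set.mem_iUnion.2 ⟨j, a, rfl⟩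
      naturality _ _ f := hom_ext fun a => Subtype.ext (cocone_w_toFun c f a) }

lemma imageCocone_ι_comp {D : J ⥤ CohSpace} (c : Cocone D) (j : J) :
    (imageCocone c).ι.app j ≫ c.pt.restrictIncl _ = c.ι.app j :=
  codRestrict_comp ..

lemma exists_ι_eq_of_isColimit {D : J ⥤ CohSpace} {c : Cocone D} (hc : IsColimit c)
    (x : c.pt.web) : ∃ j a, (c.ι.app j).toFun a = x := by
  have hsplit : hc.desc (imageCocone c) ≫ c.pt.restrictIncl _ = 𝟙 c.pt :=
    hc.hom_ext fun j => by rw [hc.fac_assoc, imageCocone_ι_comp, Category.comp_id]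
  obtain ⟨j, a, ha⟩ := Set.mem_iUnion.1 ((hc.desc (imageCocone c)).toFun x).2
  exact ⟨j, a, ha.trans (congrArg (·.toFun x) hsplit)⟩

variable [IsFiltered J]

lemma exists_common_stage {D : J ⥤ CohSpace} {c : Cocone D}
    (hc : ∀ x : c.pt.web, ∃ j a, (c.ι.app j).toFun a = x) (x x' : c.pt.web) :
    ∃ k a a', (c.ι.app k).toFun a = x ∧ (c.ι.app k).toFun a' = x' := by
  obtain ⟨j, a, rfl⟩ := hc x
  obtain ⟨j', a', rfl⟩ := hc x'
  obtain ⟨k, u, u', -⟩ := IsFilteredOrEmpty.cocone_objs j j'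
  exact ⟨k, (D.map u).toFun a, (D.map u').toFun a', cocone_w_toFun c u a, cocone_w_toFun c u' a'⟩

lemma ι_eq_of_ι_eq {D : J ⥤ CohSpace} (c s : Cocone D) {j j' : J} {a : (D.obj j).web}
    {a' : (D.obj j').web} (h : (c.ι.app j).toFun a = (c.ι.app j').toFun a') :
    (s.ι.app j).toFun a = (s.ι.app j').toFun a' := by
  obtain ⟨k, u, u', -⟩ := IsFilteredOrEmpty.cocone_objs j j'
  have hk : (D.map u).toFun a = (D.map u').toFun a' :=
    (c.ι.app k).inj (by rw [cocone_w_toFun, cocone_w_toFun, h])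
  rw [← cocone_w_toFun s u, ← cocone_w_toFun s u', hk]

noncomputable def isColimitOfCovers {D : J ⥤ CohSpace} (c : Cocone D)
    (hc : ∀ x : c.pt.web, ∃ j a, (c.ι.app j).toFun a = x) : IsColimit c := by
  choose jx ax hax using hc
  have desc_spec (s : Cocone D) (j : J) (a : (D.obj j).web) :
      (s.ι.app (jx ((c.ι.app j).toFun a))).toFun (ax _) = (s.ι.app j).toFun a :=
    ι_eq_of_ι_eq c s (hax _)
  refine
    { desc s :=
        { toFun x := (s.ι.app (jx x)).toFun (ax x)
          inj x x' h := by
            obtain ⟨k, a, a', rfl, rfl⟩ := exists_common_stage (fun x => ⟨_, _, hax x⟩) x x'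
            beta_reduce at h
            rw [desc_spec, desc_spec] at h
            exact congrArg _ ((s.ι.app k).inj h)
          coh_iff x x' := by
            obtain ⟨k, a, a', rfl, rfl⟩ := exists_common_stage (fun x => ⟨_, _, hax x⟩) x x'
            rw [desc_spec, desc_spec]
            exact ((c.ι.app k).coh_iff a a').symm.trans ((s.ι.app k).coh_iff a a') }
      fac s j := hom_ext (desc_spec s j)
      uniq s m hm := hom_ext fun x => by
        change _ = (s.ι.app (jx x)).toFun (ax x)
        rw [← hm (jx x), comp_toFun, hax] }

end Colimits

section PiColimits

variable {J : Type} [SmallCategory J] {ι : Type}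

lemma exists_ι_eq_of_isColimit_pi {D : J ⥤ (ι → CohSpace)} {c : Cocone D} (hc : IsColimit c)
    (i : ι) (x : (c.pt i).web) : ∃ j a, (c.ι.app j i).toFun a = x := by
  let s := pi.coconeOfCoconeCompEval fun i => imageCocone (pi.coconeCompEval c i)
  let m : s.pt ⟶ c.pt := fun i => (c.pt i).restrictIncl _
  have hsplit : hc.desc s ≫ m = 𝟙 c.pt :=
    hc.hom_ext fun j => by
      rw [hc.fac_assoc, Category.comp_id]
      funext i
      exact imageCocone_ι_comp (pi.coconeCompEval c i) j
  obtain ⟨j, a, ha⟩ := Set.mem_iUnion.1 ((hc.desc s i).toFun x).2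
  exact ⟨j, a, ha.trans (congrArg (·.toFun x) (congrFun hsplit i))⟩

variable [IsFiltered J]

noncomputable def isColimitOfCovers_pi {D : J ⥤ (ι → CohSpace)} (c : Cocone D)
    (hc : ∀ i (x : (c.pt i).web), ∃ j a, (c.ι.app j i).toFun a = x) : IsColimit c :=
  pi.coconeOfCoconeEvalIsColimit fun i => isColimitOfCovers (pi.coconeCompEval c i) (hc i)

lemma exists_comp_ι_eq_of_isColimit [Finite ι] {D : J ⥤ (ι → CohSpace)} {c : Cocone D}
    (hc : IsColimit c) {Y : ι → CohSpace} [∀ i, Finite (Y i).web] (m : Y ⟶ c.pt) :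
    ∃ (j : J) (κ : Y ⟶ D.obj j), κ ≫ c.ι.app j = m := by
  choose jp ap hap using fun p : Σ i, (Y i).web =>
    exists_ι_eq_of_isColimit_pi hc p.1 ((m p.1).toFun p.2)
  obtain ⟨k, hk⟩ := IsFiltered.sup_objs_exists (Set.finite_range jp).toFinset
  have u (p : Σ i, (Y i).web) : jp p ⟶ k :=
    (hk ((Set.finite_range jp).mem_toFinset.2 ⟨p, rfl⟩)).some
  have hu (i : ι) (a : (Y i).web) :
      (c.ι.app k i).toFun ((D.map (u ⟨i, a⟩) i).toFun (ap ⟨i, a⟩)) = (m i).toFun a := by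
    rw [← comp_toFun, ← Pi.comp_apply, Cocone.w]
    exact hap ⟨i, a⟩
  exact ⟨k, fun i => ofComp (c.ι.app k i) (m i) _ (hu i), funext fun i => ofComp_comp ..⟩

end PiColimits

section Subtuples

variable {ι : Type}

def restrictPi (X : ι → CohSpace) (S : ∀ i, Set (X i).web) : ι → CohSpace :=
  fun i => (X i).restrict (S i)

def restrictPiIncl (X : ι → CohSpace) (S : ∀ i, Set (X i).web) : restrictPi X S ⟶ X :=
  fun i => (X i).restrictIncl (S i)

def finiteSubDiagram (X : ι → CohSpace) : Finset (Σ i, (X i).web) ⥤ (ι → CohSpace) where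
  obj s := restrictPi X fun i => {a | ⟨i, a⟩ ∈ s}
  map h i := codRestrict (restrictPiIncl X _ i) _ fun a => leOfHom h a.2
  map_id _ := rfl
  map_comp _ _ := rfl

def finiteSubCocone (X : ι → CohSpace) : Cocone (finiteSubDiagram X) where
  pt := X
  ι := { app s := restrictPiIncl X _ }

noncomputable def isColimitFiniteSubCocone (X : ι → CohSpace) :
    IsColimit (finiteSubCocone X) :=
  isColimitOfCovers_pi _ fun i x => ⟨{⟨i, x⟩}, ⟨x, Finset.mem_singleton_self _⟩, rfl⟩

end Subtuples

section Pullbacks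

variable {X Y Z : CohSpace}

/-- Uniqueness of lifts is automatic since embeddings are monomorphisms. -/
noncomputable def isLimitOfSurjective {f : X ⟶ Z} {g : Y ⟶ Z} {P : CohSpace} {p : P ⟶ X}
    {q : P ⟶ Y} (comm : p ≫ f = q ≫ g)
    (hsurj : ∀ x y, f.toFun x = g.toFun y → ∃ w, p.toFun w = x ∧ q.toFun w = y) :
    IsLimit (PullbackCone.mk p q comm) := by
  choose w hwp hwq using fun (s : PullbackCone f g) (a : s.pt.web) =>
    hsurj _ _ (congrArg (·.toFun a) s.condition)
  refine PullbackCone.IsLimit.mk comm (fun s => ofComp p s.fst (w s) (hwp s))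
    (fun s => ofComp_comp ..) (fun s => hom_ext (hwq s)) fun s m hm _ => ?_
  rw [← cancel_mono p, hm, ofComp_comp]

/-- Since `g` is injective, a point of the pullback is determined by its first coordinate. -/
def pullback (f : X ⟶ Z) (g : Y ⟶ Z) : CohSpace :=
  X.restrict {x | ∃ y, f.toFun x = g.toFun y}

noncomputable def pullbackSnd (f : X ⟶ Z) (g : Y ⟶ Z) : pullback f g ⟶ Y :=
  ofComp g (X.restrictIncl _ ≫ f) (fun x => x.2.choose) fun x => x.2.choose_spec.symm

lemma pullback_condition (f : X ⟶ Z) (g : Y ⟶ Z) :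
    X.restrictIncl _ ≫ f = pullbackSnd f g ≫ g :=
  (ofComp_comp ..).symm

noncomputable def pullbackCone (f : X ⟶ Z) (g : Y ⟶ Z) : PullbackCone f g :=
  PullbackCone.mk _ _ (pullback_condition f g)

lemma pullbackSnd_toFun (f : X ⟶ Z) (g : Y ⟶ Z) {x : X.web} {y : Y.web}
    (h : f.toFun x = g.toFun y) : (pullbackSnd f g).toFun ⟨x, y, h⟩ = y :=
  g.inj ((congrArg (·.toFun ⟨x, y, h⟩) (pullback_condition f g)).symm.trans h)

noncomputable def isLimitPullbackCone (f : X ⟶ Z) (g : Y ⟶ Z) : IsLimit (pullbackCone f g) :=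
  isLimitOfSurjective _ fun _ _ h => ⟨⟨_, _, h⟩, rfl, pullbackSnd_toFun f g h⟩

lemma exists_eq_of_isLimit {f : X ⟶ Z} {g : Y ⟶ Z} {t : PullbackCone f g} (ht : IsLimit t)
    {x : X.web} {y : Y.web} (h : f.toFun x = g.toFun y) :
    ∃ w, t.fst.toFun w = x ∧ t.snd.toFun w = y := by
  let c := pullbackCone f g
  let w : c.pt.web := ⟨x, y, h⟩
  refine ⟨(PullbackCone.IsLimit.lift ht c.fst c.snd c.condition).toFun w, ?_, ?_⟩
  · exact congrArg (·.toFun w) (PullbackCone.IsLimit.lift_fst ht c.fst c.snd c.condition)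
  · exact (congrArg (·.toFun w) (PullbackCone.IsLimit.lift_snd ht c.fst c.snd c.condition)).trans
      (pullbackSnd_toFun f g h)

end Pullbacks

section PiPullbacks

variable {ι : Type*} {X Y Z : ι → CohSpace}

noncomputable def pullbackConePi (f : X ⟶ Z) (g : Y ⟶ Z) : PullbackCone f g :=
  PullbackCone.mk (fun i => (pullbackCone (f i) (g i)).fst)
    (fun i => (pullbackCone (f i) (g i)).snd)
    (funext fun i => (pullbackCone (f i) (g i)).condition)

noncomputable def isLimitPullbackConePi (f : X ⟶ Z) (g : Y ⟶ Z) :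
    IsLimit (pullbackConePi f g) :=
  PullbackCone.IsLimit.mk _
    (fun s i => PullbackCone.IsLimit.lift (isLimitPullbackCone (f i) (g i)) (s.fst i) (s.snd i)
      (congrFun s.condition i))
    (fun _ => funext fun i => PullbackCone.IsLimit.lift_fst (isLimitPullbackCone (f i) (g i)) ..)
    (fun _ => funext fun i => PullbackCone.IsLimit.lift_snd (isLimitPullbackCone (f i) (g i)) ..)
    fun _ _ hm _ => funext fun i =>
      (cancel_mono _).1 ((congrFun hm i).trans (PullbackCone.IsLimit.lift_fst ..).symm)

end PiPullbacks

section NormalFunctors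

variable {ι : Type} (F : (ι → CohSpace) ⥤ CohSpace)

def SupportedOn {X : ι → CohSpace} (x : (F.obj X).web) (T : ∀ i, Set (X i).web) : Prop :=
  ∃ (Y : ι → CohSpace) (m : Y ⟶ X) (y : (F.obj Y).web),
    (∀ i, Set.range (m i).toFun ⊆ T i) ∧ (F.map m).toFun y = x

variable {F}

lemma SupportedOn.exists_eq {X : ι → CohSpace} {x : (F.obj X).web} {S : ∀ i, Set (X i).web}
    (h : SupportedOn F x S) : ∃ a, (F.map (restrictPiIncl X S)).toFun a = x := by
  obtain ⟨Y, m, y, hm, rfl⟩ := h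
  let k : Y ⟶ restrictPi X S := fun i => codRestrict (m i) (S i) fun a => hm i ⟨a, rfl⟩
  exact ⟨(F.map k).toFun y, map_toFun_map_toFun F (funext fun i => codRestrict_comp ..) y⟩

lemma SupportedOn.inf [PreservesLimitsOfShape WalkingCospan F] {X : ι → CohSpace}
    {x : (F.obj X).web} {S T : ∀ i, Set (X i).web} (hS : SupportedOn F x S)
    (hT : SupportedOn F x T) : SupportedOn F x (S ⊓ T) := by
  obtain ⟨Y, m, y, hm, rfl⟩ := hS
  obtain ⟨Y', m', y', hm', hy'⟩ := hT
  let c := pullbackConePi m m'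
  have hc : IsLimit (c.map F) :=
    PullbackCone.isLimitMapConeEquiv c F (isLimitOfPreserves F (isLimitPullbackConePi m m'))
  obtain ⟨w, hw, -⟩ := exists_eq_of_isLimit hc hy'.symm
  refine ⟨_, c.fst ≫ m, w, fun i => ?_, (map_toFun_map_toFun F rfl w).symm.trans (congrArg _ hw)⟩
  rintro _ ⟨a, rfl⟩
  refine ⟨hm i ⟨_, rfl⟩, hm' i ⟨(c.snd i).toFun a, ?_⟩⟩
  exact (congrArg (·.toFun a) (congrFun c.condition i)).symm

lemma exists_finite_supportedOn [PreservesFilteredColimits F] {X : ι → CohSpace}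
    (x : (F.obj X).web) : ∃ S, (∀ i, (S i).Finite) ∧ SupportedOn F x S := by
  classical
  obtain ⟨s, a, ha⟩ :=
    exists_ι_eq_of_isColimit (isColimitOfPreserves F (isColimitFiniteSubCocone X)) x
  refine ⟨fun i => {a | ⟨i, a⟩ ∈ s}, fun i => ?_, _, restrictPiIncl X _, a,
    fun i => (range_restrictIncl ..).le, ha⟩
  exact s.finite_toSet.preimage sigma_mk_injective.injOn

theorem exists_finite_initial_of_isNormalFunctor [Finite ι] (hF : IsNormalFunctor F)
    (e : (F ⋙ webF).Elements) :
    ∃ (e₀ : (F ⋙ webF).Elements) (u₀ : e₀ ⟶ e), (∀ i, Finite (e₀.1 i).web) ∧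
      ∀ (f : (F ⋙ webF).Elements) (u : f ⟶ e), ∃! v : e₀ ⟶ f, v ≫ u = u₀ := by
  obtain ⟨_, _⟩ := hF
  obtain ⟨S, hSfin, hS, hleast⟩ :=
    Set.exists_finite_least_of_inf_mem (fun _ _ => SupportedOn.inf) (exists_finite_supportedOn e.2)
  obtain ⟨a, ha⟩ := hS.exists_eq
  refine ⟨⟨restrictPi e.1 S, a⟩, ⟨restrictPiIncl e.1 S, ha⟩, fun i => (hSfin i).to_subtype,
    fun f u => ?_⟩
  have hsub (i : ι) : Set.range (restrictPiIncl e.1 S i).toFun ⊆ Set.range (u.1 i).toFun :=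
    (range_restrictIncl ..).trans_subset (hleast _ ⟨f.1, u.1, f.2, fun _ => subset_rfl, u.2⟩ i)
  let v : restrictPi e.1 S ⟶ f.1 := fun i => liftOfRangeSubset (u.1 i) _ (hsub i)
  have hv : v ≫ u.1 = restrictPiIncl e.1 S := funext fun i => liftOfRangeSubset_comp ..
  refine ⟨⟨v, (F.map u.1).inj ?_⟩, Subtype.ext hv, fun v' hv' => Subtype.ext ?_⟩
  · exact (map_toFun_map_toFun F hv a).trans (ha.trans u.2.symm)
  · exact funext fun i =>
      (cancel_mono (u.1 i)).1 (congrFun ((congrArg Subtype.val hv').trans hv.symm) i)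

theorem preservesFilteredColimits_of_exists_finite [Finite ι]
    (h : ∀ e : (F ⋙ webF).Elements, ∃ (e₀ : (F ⋙ webF).Elements) (_ : e₀ ⟶ e),
      ∀ i, Finite (e₀.1 i).web) :
    PreservesFilteredColimits F := by
  refine ⟨fun J _ _ => ⟨fun {K} => ⟨fun {c} hc => ⟨isColimitOfCovers _ fun x => ?_⟩⟩⟩⟩
  obtain ⟨e₀, u₀, hfin⟩ := h ⟨c.pt, x⟩
  obtain ⟨j, κ, hκ⟩ := exists_comp_ι_eq_of_isColimit hc u₀.1
  exact ⟨j, (F.map κ).toFun e₀.2, (map_toFun_map_toFun F hκ _).trans u₀.2⟩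

lemma preservesLimit_cospan_of_exists_weaklyInitial
    (h : ∀ e : (F ⋙ webF).Elements, ∃ (e₀ : (F ⋙ webF).Elements) (u₀ : e₀ ⟶ e),
      ∀ (f : (F ⋙ webF).Elements) (u : f ⟶ e), ∃ v : e₀ ⟶ f, v ≫ u = u₀)
    {X Y Z : ι → CohSpace} (f : X ⟶ Z) (g : Y ⟶ Z) : PreservesLimit (cospan f g) F := by
  refine preservesLimit_of_preserves_limit_cone (isLimitPullbackConePi f g)
    ((PullbackCone.isLimitMapConeEquiv _ F).symm (isLimitOfSurjective _ fun x y hxy => ?_))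
  obtain ⟨e₀, u₀, hu₀⟩ := h ⟨Z, (F.map f).toFun x⟩
  obtain ⟨⟨vX, hvX⟩, hX⟩ := hu₀ ⟨X, x⟩ ⟨f, rfl⟩
  obtain ⟨⟨vY, hvY⟩, hY⟩ := hu₀ ⟨Y, y⟩ ⟨g, hxy.symm⟩
  have hcomm : vX ≫ f = vY ≫ g := (congrArg Subtype.val hX).trans (congrArg Subtype.val hY).symm
  let κ := PullbackCone.IsLimit.lift (isLimitPullbackConePi f g) vX vY hcomm
  exact ⟨(F.map κ).toFun e₀.2,
    (map_toFun_map_toFun F (PullbackCone.IsLimit.lift_fst ..) _).trans hvX,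
    (map_toFun_map_toFun F (PullbackCone.IsLimit.lift_snd ..) _).trans hvY⟩

lemma preservesPullbacks_of_exists_weaklyInitial
    (h : ∀ e : (F ⋙ webF).Elements, ∃ (e₀ : (F ⋙ webF).Elements) (u₀ : e₀ ⟶ e),
      ∀ (f : (F ⋙ webF).Elements) (u : f ⟶ e), ∃ v : e₀ ⟶ f, v ≫ u = u₀) :
    PreservesLimitsOfShape WalkingCospan F :=
  ⟨fun {K} =>
    have := preservesLimit_cospan_of_exists_weaklyInitial h (K.map WalkingCospan.Hom.inl)
      (K.map WalkingCospan.Hom.inr)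
    preservesLimit_of_iso_diagram F (diagramIsoCospan K).symm⟩

end NormalFunctors

end CohSpace

theorem stmt3 {n : ℕ} (F : CohTuple n ⥤ CohSpace) :
    (IsNormalFunctor F ↔
      ∀ e : Elts F, ∃ (e₀ : Elts F) (u₀ : e₀ ⟶ e),
        (∀ i, Finite (e₀.1 i).web) ∧
          ∀ (f : Elts F) (u : f ⟶ e), ∃! v : e₀ ⟶ f, v ≫ u = u₀) ∧
    (IsNormalFunctor F →
      ∀ (e e₀ : Elts F) (u₀ : e₀ ⟶ e),
        (∀ i, Finite (e₀.1 i).web) →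
        (∀ (f : Elts F) (u : f ⟶ e), ∃! v : e₀ ⟶ f, v ≫ u = u₀) →
        ∀ (f : Elts F) (u : f ⟶ e₀), ∃! v : e₀ ⟶ f, v ≫ u = 𝟙 e₀) := by
  refine ⟨⟨CohSpace.exists_finite_initial_of_isNormalFunctor, fun h => ⟨?_, ?_⟩⟩,
    fun _ _ _ _ _ => existsUnique_section_of_initial_over⟩
  · refine CohSpace.preservesFilteredColimits_of_exists_finite fun e => ?_
    obtain ⟨e₀, u₀, hfin, -⟩ := h e
    exact ⟨e₀, u₀, hfin⟩
  · refine CohSpace.preservesPullbacks_of_exists_weaklyInitial fun e => ?_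
    obtain ⟨e₀, u₀, -, huniv⟩ := h e
    exact ⟨e₀, u₀, fun f u => (huniv f u).exists⟩
end

section
/- A normal functor F : CohI^n → CohI is finite if and only if NF(F) is a finite set. -/
open CategoryTheory Limits

/-!
Every point `x` of `F` on finite webs lies below a normal form: an element over `(X, x)` of
minimal total web size is a normal form, since every embedding into it is then bijective.
Hence, when `F` is finite, every normal form is isomorphic to a point of `F` on one of the
finitely many canonical tuples `Fin k₁, …, Fin kₙ` with all `kᵢ ≤ deg F`. Conversely, if there
are finitely many normal forms, every point of `F` on finite webs is the image of one of them
along one of finitely many embeddings, and their sizes bound the degree.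
-/

namespace CohSpace

def isoMk {X Y : CohSpace} (e : X.web ≃ Y.web) (he : ∀ x x', X.coh x x' ↔ Y.coh (e x) (e x')) :
    X ≅ Y where
  hom := ⟨e, e.injective, he⟩
  inv := ⟨e.symm, e.symm.injective, fun y y' => by rw [he, e.apply_symm_apply, e.apply_symm_apply]⟩
  hom_inv_id := CohEmb.ext (funext e.symm_apply_apply)
  inv_hom_id := CohEmb.ext (funext e.apply_symm_apply)

def webEquivOfIso {X Y : CohSpace} (φ : X ≅ Y) : X.web ≃ Y.web where
  toFun := φ.hom.toFun
  invFun := φ.inv.toFun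
  left_inv x := congrFun (congrArg CohEmb.toFun φ.hom_inv_id) x
  right_inv y := congrFun (congrArg CohEmb.toFun φ.inv_hom_id) y

lemma isIso_of_bijective {X Y : CohSpace} (f : X ⟶ Y) (hf : Function.Bijective f.toFun) :
    IsIso f :=
  (isoMk (Equiv.ofBijective _ hf) f.coh_iff).isIso_hom

instance finite_hom {X Y : CohSpace} [Finite X.web] [Finite Y.web] : Finite (X ⟶ Y) :=
  Finite.of_injective (fun f : CohEmb X Y => f.toFun) fun _ _ => CohEmb.ext

noncomputable def finCohData (X : CohSpace) [Finite X.web] : FinCohData where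
  k := Nat.card X.web
  r i j := X.coh ((Finite.equivFin X.web).symm i) ((Finite.equivFin X.web).symm j)
  refl _ := X.refl _
  symm h := X.symm h

noncomputable def isoFinCohData (X : CohSpace) [Finite X.web] : X ≅ X.finCohData.toCoh :=
  isoMk (Finite.equivFin X.web) fun x x' => by
    show X.coh x x' ↔ X.coh ((Finite.equivFin X.web).symm (Finite.equivFin X.web x))
      ((Finite.equivFin X.web).symm (Finite.equivFin X.web x'))
    rw [Equiv.symm_apply_apply, Equiv.symm_apply_apply]

end CohSpace

lemma finite_finCohData_k_le (K : ℕ) : Finite {d : FinCohData // d.k ≤ K} := by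
  refine Finite.of_injective (β := Σ k : Fin (K + 1), (Fin k → Fin k → Prop))
    (fun d => ⟨⟨d.1.k, Nat.lt_succ_of_le d.2⟩, d.1.r⟩) ?_
  rintro ⟨⟨k, r, _, _⟩, _⟩ ⟨⟨k', r', _, _⟩, _⟩ h
  obtain ⟨hk, hr⟩ := Sigma.mk.inj_iff.mp h
  cases congrArg Fin.val hk
  cases eq_of_heq hr
  rfl

section Elements

variable {n : ℕ} {F : CohTuple n ⥤ CohSpace}

def eltsWebEquiv {e e' : Elts F} (ψ : e ≅ e') (i : Fin n) : (e.1 i).web ≃ (e'.1 i).web :=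
  CohSpace.webEquivOfIso (Pi.isoApp ((CategoryOfElements.π _).mapIso ψ) i)

lemma finite_web_of_hom {X Y : CohTuple n} (u : X ⟶ Y) [∀ i, Finite (Y i).web] (i : Fin n) :
    Finite (X i).web :=
  Finite.of_injective _ (u i).inj

lemma isNormalForm_of_forall_isIso {e : Elts F} (hfin : ∀ i, Finite (e.1 i).web)
    (hiso : ∀ (f : Elts F) (u : f ⟶ e), IsIso u) : IsNormalForm e :=
  ⟨hfin, fun _ u => ⟨inv u, IsIso.inv_hom_id u, fun _ hv => IsIso.eq_inv_of_inv_hom_id hv⟩⟩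

lemma isIso_of_sum_card_le {f e : Elts F} (u : f ⟶ e) [∀ i, Finite (e.1 i).web]
    (hcard : ∑ i, Nat.card (e.1 i).web ≤ ∑ i, Nat.card (f.1 i).web) : IsIso u := by
  have hle : ∀ i, Nat.card (f.1 i).web ≤ Nat.card (e.1 i).web := fun i =>
    Nat.card_le_card_of_injective _ (u.1 i).inj
  have heq := (Finset.sum_eq_sum_iff_of_le fun i _ => hle i).mp (le_antisymm
    (Finset.sum_le_sum fun i _ => hle i) hcard)
  have : IsIso ((CategoryOfElements.π _).map u) := (isIso_pi_iff u.1).mpr fun i =>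
    CohSpace.isIso_of_bijective _
      ((u.1 i).inj.bijective_of_nat_card_le (heq i (Finset.mem_univ i)).ge)
  exact isIso_of_reflects_iso u (CategoryOfElements.π _)

lemma exists_isNormalForm_hom (X : CohTuple n) [∀ i, Finite (X i).web] (x : (F.obj X).web) :
    ∃ e : Elts F, IsNormalForm e ∧ Nonempty (e ⟶ ⟨X, x⟩) := by
  obtain ⟨e, ⟨u⟩, hmin⟩ := (InvImage.wf (fun e : Elts F => ∑ i, Nat.card (e.1 i).web)
    wellFounded_lt).has_min {e | Nonempty (e ⟶ ⟨X, x⟩)} ⟨⟨X, x⟩, ⟨𝟙 _⟩⟩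
  have := finite_web_of_hom u.1
  refine ⟨e, isNormalForm_of_forall_isIso this fun f v => ?_, ⟨u⟩⟩
  have := finite_web_of_hom v.1
  exact isIso_of_sum_card_le v (not_lt.mp (hmin f ⟨v ≫ u⟩))

end Elements

section Finiteness

variable {n : ℕ} {F : CohTuple n ⥤ CohSpace}

lemma card_le_degree {e : Elts F} (he : IsNormalForm e) (i : Fin n) :
    (Nat.card (e.1 i).web : ℕ∞) ≤ degree F :=
  le_iSup_of_le e (le_iSup₂_of_le he i le_rfl)

lemma exists_iso_canonTuple (e : Elts F) [∀ i, Finite (e.1 i).web] :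
    ∃ (d : Fin n → FinCohData) (x : (F.obj (canonTuple d)).web),
      (∀ i, (d i).k = Nat.card (e.1 i).web) ∧ Nonempty (e ≅ ⟨canonTuple d, x⟩) :=
  let φ : e.1 ≅ canonTuple fun i => (e.1 i).finCohData := Pi.isoMk fun i => (e.1 i).isoFinCohData
  ⟨_, _, fun _ => rfl, ⟨CategoryOfElements.isoMk e ⟨_, (F.map φ.hom).toFun e.2⟩ φ rfl⟩⟩

lemma nfSet_finite_of_isFiniteFunctor (hF : IsFiniteFunctor F) : (NFSet F).Finite := by
  set K := (degree F).toNat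
  let D := {d : Fin n → FinCohData // ∀ i, (d i).k ≤ K}
  have := finite_finCohData_k_le K
  have : Finite D :=
    Finite.of_equiv _ (Equiv.subtypePiEquivPi (p := fun _ (d : FinCohData) => d.k ≤ K)).symm
  have : ∀ d : D, Finite (F.obj (canonTuple d.1)).web := fun d =>
    hF.1 _ fun i => inferInstanceAs (Finite (Fin (d.1 i).k))
  refine (Set.finite_range fun t : Σ d : D, (F.obj (canonTuple d.1)).web =>
    Quotient.mk (isIsomorphicSetoid (Elts F)) ⟨canonTuple t.1.1, t.2⟩).subset ?_
  rintro _ ⟨e, he, rfl⟩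
  have := he.1
  obtain ⟨d, x, hd, ⟨ψ⟩⟩ := exists_iso_canonTuple e
  have hdK : ∀ i, (d i).k ≤ K := fun i => by
    simpa [hd i] using ENat.toNat_le_toNat (card_le_degree he i) hF.2.ne
  exact ⟨⟨⟨d, hdK⟩, x⟩, Quotient.sound ⟨ψ.symm⟩⟩

lemma exists_isNormalForm_cover :
    ∃ e : NFSet F → Elts F, (∀ q, IsNormalForm (e q)) ∧
      ∀ e', IsNormalForm e' → ∃ q, Nonempty (e q ≅ e') := by
  choose e he hq using fun q : NFSet F => q.2
  refine ⟨e, he, fun e' he' => ⟨⟨_, e', he', rfl⟩, ?_⟩⟩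
  exact Quotient.exact (hq ⟨_, e', he', rfl⟩)

variable {ι : Type*} [Finite ι] (e : ι → Elts F)

lemma preservesFiniteWebs_of_cover (he : ∀ j, IsNormalForm (e j))
    (hcover : ∀ e', IsNormalForm e' → ∃ j, Nonempty (e j ≅ e')) : PreservesFiniteWebs F := by
  intro X hX
  have : ∀ j, Finite ((e j).1 ⟶ X) := fun j => by
    have := (he j).1
    exact inferInstanceAs (Finite (∀ i, (e j).1 i ⟶ X i))
  refine Finite.of_surjective (fun p : Σ j, ((e j).1 ⟶ X) => (F.map p.2).toFun (e p.1).2)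
    fun x => ?_
  obtain ⟨e', he', ⟨v⟩⟩ := exists_isNormalForm_hom X x
  obtain ⟨j, ⟨ψ⟩⟩ := hcover e' he'
  exact ⟨⟨j, (ψ.hom ≫ v).1⟩, (ψ.hom ≫ v).2⟩

lemma degree_lt_top_of_cover (hcover : ∀ e', IsNormalForm e' → ∃ j, Nonempty (e j ≅ e')) :
    degree F < ⊤ := by
  obtain ⟨N, hN⟩ := (Set.finite_range fun p : ι × Fin n => Nat.card ((e p.1).1 p.2).web).bddAbove
  refine lt_of_le_of_lt (b := (N : ℕ∞)) (iSup₂_le fun e' he' => iSup_le fun i => ?_)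
    (ENat.natCast_lt_top N)
  obtain ⟨j, ⟨ψ⟩⟩ := hcover e' he'
  rw [← Nat.card_congr (eltsWebEquiv ψ i)]
  exact_mod_cast hN ⟨(j, i), rfl⟩

end Finiteness

theorem stmt7_general {n : ℕ} (F : CohTuple n ⥤ CohSpace) :
    IsFiniteFunctor F ↔ (NFSet F).Finite := by
  refine ⟨nfSet_finite_of_isFiniteFunctor, fun h => ?_⟩
  obtain ⟨e, he, hcover⟩ := exists_isNormalForm_cover (F := F)
  have := h.to_subtype
  exact ⟨preservesFiniteWebs_of_cover e he hcover, degree_lt_top_of_cover e hcover⟩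

theorem stmt7 {n : ℕ} (F : CohTuple n ⥤ CohSpace) (hF : IsNormalFunctor F) :
    IsFiniteFunctor F ↔ (NFSet F).Finite :=
  stmt7_general F
end
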